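/- Let I¹, I², I³ ⊂ {1,…,n} be pairwise disjoint, and let r̲_i, r̄_i : l∞^{n−1} → ℝ be 1-Lipschitz maps for i ∈ I¹, r̲_i : l∞^{n−1} → ℝ be 1-Lipschitz maps for i ∈ I², and r̄_i : l∞^{n−1} → ℝ be 1-Lipschitz maps for i ∈ I³. Define Q¹ := { x ∈ ℝ^n : for all i ∈ I¹, r̲_i(π̂_i(x)) ≤ x_i ≤ r̄_i(π̂_i(x)) }, Q² := { x ∈ ℝ^n : for all i ∈ I², r̲_i(π̂_i(x)) ≤ x_i }, Q³ := { x ∈ ℝ^n : for all i ∈ I³, x_i ≤ r̄_i(π̂_i(x)) }. If Q := Q¹ ∩ Q² ∩ Q³ ≠ ∅ and r̲_i ≤ r̄_i pointwise for every i ∈ I¹, then Q ⊂ l∞^n is injective. -/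

import Mathlib

open Set Metric

/-- A metric space `X` is *injective* if for all metric spaces `A`, `B`, every isometric
embedding `i : A → B` and every `1`-Lipschitz map `f : A → X`, there is a `1`-Lipschitz
map `g : B → X` with `g ∘ i = f`. -/
def IsInjectiveMetricSpace (X : Type) [MetricSpace X] : Prop :=
  ∀ (A B : Type) [MetricSpace A] [MetricSpace B], ∀ (i : A → B) (f : A → X),
    Isometry i → LipschitzWith 1 f →
      ∃ g : B → X, LipschitzWith 1 g ∧ ∀ a, g (i a) = f a

/-- A subset of `l∞ⁿ = (Fin n → ℝ)` (whose product metric is the sup-metric) is injective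
if it is an injective metric space with the induced metric. -/
def IsInjectiveSubset {n : ℕ} (S : Set (Fin n → ℝ)) : Prop :=
  IsInjectiveMetricSpace S

/-- The `1`-Lipschitz map `π̂ᵢ : l∞^{n+1} → l∞ⁿ` deleting the `i`-th coordinate. -/
def deleteCoord {n : ℕ} (i : Fin (n + 1)) (x : Fin (n + 1) → ℝ) : Fin n → ℝ :=
  fun j => x (i.succAbove j)

/-!
In `l∞` closed balls are boxes, so `l∞ⁿ` is hyperconvex: closed balls `B(c_α, r_α)` with
`d(c_α, c_β) ≤ r_α + r_β` for all `α, β` have a common point. Hyperconvex spaces are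
injective, by extending a partial nonexpansive map one point at a time and applying Zorn's
lemma.

The set `Q` is the fixed point set of the nonexpansive map `φ` that clamps each `xᵢ` between
`r̲ᵢ(π̂ᵢ x)` and `r̄ᵢ(π̂ᵢ x)` (this is where `r̲ᵢ ≤ r̄ᵢ` enters). If such a family of balls has its
centres in `Q`, their intersection `K` is a nonempty compact convex box, and `φ` maps `K` into
itself because it fixes the centres. A nonexpansive self-map of a compact convex set has a
fixed point: the contractions `c φ + (1 - c) x₀` with `c < 1` have fixed points that are
approximate fixed points of `φ`, so by compactness `dist x (φ x)` attains the value `0`. This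
point lies in `Q ∩ K`. Hence `Q` is hyperconvex, and therefore injective.
-/

open Function
open scoped NNReal

def IsHyperconvex (X : Type*) [PseudoMetricSpace X] : Prop :=
  ∀ (ι : Type) (c : ι → X) (r : ι → ℝ), (∀ α β, dist (c α) (c β) ≤ r α + r β) →
    (⋂ α, closedBall (c α) (r α)).Nonempty

theorem isHyperconvex_real : IsHyperconvex ℝ := by
  intro ι c r hcr
  have hsep : ∀ α β, c α - r α ≤ c β + r β := fun α β => by
    have h := hcr α β
    rw [Real.dist_eq, abs_le] at h
    linarith [h.2]
  refine ⟨⨆ α, (c α - r α), mem_iInter.2 fun α => ?_⟩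
  have hbdd : BddAbove (range fun β => c β - r β) := ⟨c α + r α, forall_mem_range.2 (hsep · α)⟩
  have : Nonempty ι := ⟨α⟩
  rw [mem_closedBall, Real.dist_eq, abs_sub_le_iff]
  constructor
  · linarith [ciSup_le (hsep · α)]
  · linarith [le_ciSup hbdd α]

theorem IsHyperconvex.pi {ι : Type*} [Fintype ι] {β : ι → Type*} [∀ i, PseudoMetricSpace (β i)]
    (h : ∀ i, IsHyperconvex (β i)) : IsHyperconvex (∀ i, β i) := by
  intro κ c r hcr
  have hcoord : ∀ i, ∃ y, ∀ α, dist y (c α i) ≤ r α := fun i => by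
    obtain ⟨y, hy⟩ := h i κ (c · i) r fun α β => (dist_le_pi_dist _ _ i).trans (hcr α β)
    exact ⟨y, fun α => mem_closedBall.1 (mem_iInter.1 hy α)⟩
  choose x hx using hcoord
  refine ⟨x, mem_iInter.2 fun α => mem_closedBall.2 <| (dist_pi_le_iff ?_).2 (hx · α)⟩
  linarith [dist_self (c α) ▸ hcr α α]

section FixedPoint

variable {E : Type*} [NormedAddCommGroup E] [NormedSpace ℝ E] {K : Set E} {f : E → E}

theorem Convex.exists_dist_apply_lt (hconv : Convex ℝ K) (hK : IsComplete K)
    (hKb : Bornology.IsBounded K) (hf : LipschitzOnWith 1 f K) (hfK : MapsTo f K K)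
    {x₀ : E} (hx₀ : x₀ ∈ K) {ε : ℝ} (hε : 0 < ε) : ∃ y ∈ K, dist y (f y) < ε := by
  set D := diam K
  have hD : 0 ≤ D := diam_nonneg
  set c : ℝ≥0 := ⟨D / (D + ε), by positivity⟩
  have hc : c < 1 := by
    rw [← NNReal.coe_lt_coe]
    exact (div_lt_one (by positivity)).2 (by linarith)
  have hc' : (c : ℝ) ≤ 1 := by exact_mod_cast hc.le
  set g : E → E := fun x => (c : ℝ) • f x + (1 - c : ℝ) • x₀
  have hgK : MapsTo g K K := fun x hx => hconv (hfK hx) hx₀ c.2 (by linarith) (by ring)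
  have hg : LipschitzOnWith c g K := LipschitzOnWith.of_dist_le_mul fun x hx y hy => by
    have hxy : dist (f x) (f y) ≤ dist x y := by simpa using hf.dist_le_mul x hx y hy
    simpa [g, dist_smul₀] using mul_le_mul_of_nonneg_left hxy c.2
  obtain ⟨y, hy, hgy, -⟩ :=
    ContractingWith.exists_fixedPoint' hK hgK ⟨hc, hg.mapsToRestrict hgK⟩ hx₀ (edist_ne_top _ _)
  refine ⟨y, hy, ?_⟩
  calc dist y (f y) = dist (g y) (f y) := by rw [hgy.eq]
    _ = (1 - c) * dist x₀ (f y) := by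
      rw [dist_eq_norm, dist_eq_norm, ← Real.norm_of_nonneg (by linarith : (0 : ℝ) ≤ 1 - c),
        ← norm_smul]
      congr 1
      simp only [g]
      module
    _ ≤ (1 - c) * D :=
      mul_le_mul_of_nonneg_left (dist_le_diam_of_mem hKb hx₀ (hfK hy)) (by linarith)
    _ < ε := by
      rw [show (c : ℝ) = D / (D + ε) from rfl, one_sub_div (by positivity), add_sub_cancel_left,
        div_mul_eq_mul_div, div_lt_iff₀ (by positivity)]
      nlinarith

theorem IsCompact.exists_isFixedPt_of_convex (hK : IsCompact K) (hconv : Convex ℝ K)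
    (hne : K.Nonempty) (hf : LipschitzOnWith 1 f K) (hfK : MapsTo f K K) :
    ∃ x ∈ K, IsFixedPt f x := by
  obtain ⟨x₀, hx₀⟩ := hne
  obtain ⟨x, hx, hmin⟩ := hK.exists_isMinOn ⟨x₀, hx₀⟩
    (continuous_dist.comp_continuousOn (continuousOn_id.prodMk hf.continuousOn))
  refine ⟨x, hx, (dist_le_zero.1 <| le_of_forall_gt_imp_ge_of_dense fun ε hε => ?_).symm⟩
  obtain ⟨y, hy, hyε⟩ := hconv.exists_dist_apply_lt hK.isComplete hK.isBounded hf hfK hx₀ hε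
  exact (hmin hy).trans hyε.le

theorem IsHyperconvex.fixedPoints [ProperSpace E] (hE : IsHyperconvex E) {φ : E → E}
    (hφ : LipschitzWith 1 φ) (hne : (fixedPoints φ).Nonempty) :
    IsHyperconvex (fixedPoints φ) := by
  intro ι c r hcr
  rcases isEmpty_or_nonempty ι with hι | ⟨⟨α₀⟩⟩
  · obtain ⟨x, hx⟩ := hne
    exact ⟨⟨x, hx⟩, by simp⟩
  set K := ⋂ α, closedBall (c α : E) (r α)
  have hKne : K.Nonempty := hE ι (c ·) r hcr
  have hKc : IsCompact K := (isCompact_closedBall (c α₀ : E) (r α₀)).of_isClosed_subset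
    (isClosed_iInter fun _ => isClosed_closedBall) (iInter_subset _ α₀)
  have hKconv : Convex ℝ K := convex_iInter fun _ => convex_closedBall _ _
  have hφK : MapsTo φ K K := fun x hx => mem_iInter.2 fun α => by
    rw [mem_closedBall, ← (c α).2.eq]
    calc dist (φ x) (φ (c α)) ≤ dist x (c α) := by simpa using hφ.dist_le_mul x (c α)
      _ ≤ r α := mem_closedBall.1 (mem_iInter.1 hx α)
  obtain ⟨x, hx, hfix⟩ := hKc.exists_isFixedPt_of_convex hKconv hKne hφ.lipschitzOnWith hφK
  exact ⟨⟨x, hfix⟩, mem_iInter.2 fun α => mem_closedBall.2 (mem_closedBall.1 (mem_iInter.1 hx α))⟩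

end FixedPoint

section Extension

variable {B X : Type} [PseudoMetricSpace B]

def IsNonexpansiveRel [PseudoMetricSpace X] (F : Set (B × X)) : Prop :=
  ∀ p ∈ F, ∀ q ∈ F, dist p.2 q.2 ≤ dist p.1 q.1

theorem IsNonexpansiveRel.insert [PseudoMetricSpace X] {F : Set (B × X)}
    (hF : IsNonexpansiveRel F) {b : B} {x : X} (hx : ∀ p ∈ F, dist x p.2 ≤ dist b p.1) :
    IsNonexpansiveRel (insert (b, x) F) := by
  rintro p (rfl | hp) q (rfl | hq)
  · simp
  · exact hx q hq
  · rw [dist_comm, dist_comm p.1]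
    exact hx p hp
  · exact hF p hp q hq

theorem IsNonexpansiveRel.sUnion [PseudoMetricSpace X] {c : Set (Set (B × X))}
    (hc : IsChain (· ⊆ ·) c) (h : ∀ F ∈ c, IsNonexpansiveRel F) : IsNonexpansiveRel (⋃₀ c) := by
  rintro p ⟨F, hF, hp⟩ q ⟨G, hG, hq⟩
  rcases hc.total hF hG with hFG | hGF
  · exact h G hG p (hFG hp) q hq
  · exact h F hF p hp q (hGF hq)

theorem IsHyperconvex.exists_isNonexpansiveRel_insert [PseudoMetricSpace X] (hX : IsHyperconvex X)
    {F : Set (B × X)} (hF : IsNonexpansiveRel F) (b : B) :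
    ∃ x, IsNonexpansiveRel (insert (b, x) F) := by
  obtain ⟨x, hx⟩ := hX F (fun p => p.1.2) (fun p => dist b p.1.1) fun p q =>
    (hF p p.2 q q.2).trans (dist_triangle_left _ _ b)
  exact ⟨x, hF.insert fun p hp => mem_closedBall.1 (mem_iInter.1 hx ⟨p, hp⟩)⟩

theorem IsHyperconvex.exists_lipschitzWith_extend [MetricSpace X] (hX : IsHyperconvex X)
    {F : Set (B × X)} (hF : IsNonexpansiveRel F) :
    ∃ g : B → X, LipschitzWith 1 g ∧ ∀ p ∈ F, g p.1 = p.2 := by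
  obtain ⟨M, hFM, hM⟩ := zorn_subset_nonempty {G | IsNonexpansiveRel G}
    (fun c hcS hc _ => ⟨⋃₀ c, IsNonexpansiveRel.sUnion hc hcS, fun _ => subset_sUnion_of_mem⟩) F hF
  have htotal : ∀ b, ∃ x, (b, x) ∈ M := fun b => by
    obtain ⟨x, hx⟩ := hX.exists_isNonexpansiveRel_insert hM.prop b
    exact ⟨x, hM.2 hx (subset_insert _ _) (mem_insert _ _)⟩
  choose g hg using htotal
  refine ⟨g, LipschitzWith.of_dist_le_mul fun b b' => ?_, fun p hp => dist_le_zero.1 ?_⟩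
  · simpa using hM.prop _ (hg b) _ (hg b')
  · simpa using hM.prop _ (hg p.1) _ (hFM hp)

end Extension

theorem IsHyperconvex.isInjectiveMetricSpace {X : Type} [MetricSpace X] (hX : IsHyperconvex X) :
    IsInjectiveMetricSpace X := by
  intro A B _ _ i f hi hf
  obtain ⟨g, hg, hgf⟩ := hX.exists_lipschitzWith_extend (F := range fun a => (i a, f a)) <| by
    rintro _ ⟨a, rfl⟩ _ ⟨a', rfl⟩
    simpa [hi.dist_eq] using hf.dist_le_mul a a'
  exact ⟨g, hg, fun a => hgf _ ⟨a, rfl⟩⟩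

theorem lipschitzWith_pi {α ι : Type*} [PseudoMetricSpace α] [Fintype ι] {β : ι → Type*}
    [∀ i, PseudoMetricSpace (β i)] {f : α → ∀ i, β i} {K : ℝ≥0}
    (hf : ∀ i, LipschitzWith K fun x => f x i) : LipschitzWith K f :=
  LipschitzWith.of_dist_le_mul fun x y =>
    (dist_pi_le_iff (by positivity)).2 fun i => (hf i).dist_le_mul x y

theorem max_min_eq_self_iff {α : Type*} [LinearOrder α] {a b x : α} (hab : a ≤ b) :
    max a (min x b) = x ↔ a ≤ x ∧ x ≤ b := by
  constructor
  · intro h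
    exact ⟨h ▸ le_max_left _ _, by rw [← h]; exact max_le hab (min_le_right _ _)⟩
  · rintro ⟨hax, hxb⟩
    rw [min_eq_left hxb, max_eq_right hax]

section Sandwich

variable {n : ℕ} {I1 I2 I3 : Set (Fin (n + 1))} {rlo rhi : Fin (n + 1) → (Fin n → ℝ) → ℝ}

theorem lipschitzWith_deleteCoord (i : Fin (n + 1)) : LipschitzWith 1 (deleteCoord (n := n) i) :=
  lipschitzWith_pi fun j => LipschitzWith.eval (i.succAbove j)

theorem LipschitzWith.comp_deleteCoord {f : (Fin n → ℝ) → ℝ} (hf : LipschitzWith 1 f)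
    (i : Fin (n + 1)) : LipschitzWith 1 fun x => f (deleteCoord i x) :=
  mul_one (1 : ℝ≥0) ▸ hf.comp (lipschitzWith_deleteCoord i)

open Classical in
noncomputable def sandwichClamp (I1 I2 I3 : Set (Fin (n + 1)))
    (rlo rhi : Fin (n + 1) → (Fin n → ℝ) → ℝ) (x : Fin (n + 1) → ℝ) (i : Fin (n + 1)) : ℝ :=
  if i ∈ I1 then max (rlo i (deleteCoord i x)) (min (x i) (rhi i (deleteCoord i x)))
  else if i ∈ I2 then max (rlo i (deleteCoord i x)) (x i)
  else if i ∈ I3 then min (x i) (rhi i (deleteCoord i x))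
  else x i

theorem lipschitzWith_sandwichClamp
    (hlo1 : ∀ i ∈ I1, LipschitzWith 1 (rlo i)) (hhi1 : ∀ i ∈ I1, LipschitzWith 1 (rhi i))
    (hlo2 : ∀ i ∈ I2, LipschitzWith 1 (rlo i)) (hhi3 : ∀ i ∈ I3, LipschitzWith 1 (rhi i)) :
    LipschitzWith 1 (sandwichClamp I1 I2 I3 rlo rhi) := by
  refine lipschitzWith_pi fun i => ?_
  have hev : LipschitzWith 1 fun x : Fin (n + 1) → ℝ => x i := LipschitzWith.eval i
  by_cases h1 : i ∈ I1
  · simpa only [sandwichClamp, if_pos h1, max_self] using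
      ((hlo1 i h1).comp_deleteCoord i).max (hev.min ((hhi1 i h1).comp_deleteCoord i))
  by_cases h2 : i ∈ I2
  · simpa only [sandwichClamp, if_neg h1, if_pos h2, max_self] using
      ((hlo2 i h2).comp_deleteCoord i).max hev
  by_cases h3 : i ∈ I3
  · simpa only [sandwichClamp, if_neg h1, if_neg h2, if_pos h3, max_self] using
      hev.min ((hhi3 i h3).comp_deleteCoord i)
  · simpa only [sandwichClamp, if_neg h1, if_neg h2, if_neg h3] using hev

theorem sandwichClamp_apply_eq_self_iff (h12 : I1 ∩ I2 = ∅) (h13 : I1 ∩ I3 = ∅)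
    (h23 : I2 ∩ I3 = ∅) (hle : ∀ i ∈ I1, ∀ y, rlo i y ≤ rhi i y) (x : Fin (n + 1) → ℝ)
    (i : Fin (n + 1)) :
    sandwichClamp I1 I2 I3 rlo rhi x i = x i ↔
      (i ∈ I1 → rlo i (deleteCoord i x) ≤ x i ∧ x i ≤ rhi i (deleteCoord i x)) ∧
      (i ∈ I2 → rlo i (deleteCoord i x) ≤ x i) ∧ (i ∈ I3 → x i ≤ rhi i (deleteCoord i x)) := by
  by_cases h1 : i ∈ I1
  · have h2 : i ∉ I2 := fun h2 => h12.subset ⟨h1, h2⟩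
    have h3 : i ∉ I3 := fun h3 => h13.subset ⟨h1, h3⟩
    simp [sandwichClamp, h1, h2, h3, max_min_eq_self_iff (hle i h1 _)]
  by_cases h2 : i ∈ I2
  · have h3 : i ∉ I3 := fun h3 => h23.subset ⟨h2, h3⟩
    simp [sandwichClamp, h1, h2, h3]
  · simp [sandwichClamp, h1, h2]

theorem fixedPoints_sandwichClamp (h12 : I1 ∩ I2 = ∅) (h13 : I1 ∩ I3 = ∅) (h23 : I2 ∩ I3 = ∅)
    (hle : ∀ i ∈ I1, ∀ y, rlo i y ≤ rhi i y) :
    fixedPoints (sandwichClamp I1 I2 I3 rlo rhi) =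
      {x | ∀ i ∈ I1, rlo i (deleteCoord i x) ≤ x i ∧ x i ≤ rhi i (deleteCoord i x)} ∩
      {x | ∀ i ∈ I2, rlo i (deleteCoord i x) ≤ x i} ∩
      {x | ∀ i ∈ I3, x i ≤ rhi i (deleteCoord i x)} := by
  ext x
  simp only [mem_fixedPoints, IsFixedPt, funext_iff,
    sandwichClamp_apply_eq_self_iff h12 h13 h23 hle, forall_and, mem_inter_iff, mem_ofPred_eq,
    and_assoc]

end Sandwich

/-- Two-sided/one-sided sandwich sets by `1`-Lipschitz bounds: if
`Q = Q¹ ∩ Q² ∩ Q³ ≠ ∅` with two-sided constraints on `I¹`, lower constraints on `I²` and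
upper constraints on `I³` (pairwise disjoint), and `r̲ᵢ ≤ r̄ᵢ` on `I¹`, then `Q ⊆ l∞^{n+1}`
is injective. -/
theorem mixed_sandwich_injective {n : ℕ} (I1 I2 I3 : Set (Fin (n + 1)))
    (h12 : I1 ∩ I2 = ∅) (h13 : I1 ∩ I3 = ∅) (h23 : I2 ∩ I3 = ∅)
    (rlo rhi : Fin (n + 1) → (Fin n → ℝ) → ℝ)
    (hlo1 : ∀ i ∈ I1, LipschitzWith 1 (rlo i)) (hhi1 : ∀ i ∈ I1, LipschitzWith 1 (rhi i))
    (hlo2 : ∀ i ∈ I2, LipschitzWith 1 (rlo i)) (hhi3 : ∀ i ∈ I3, LipschitzWith 1 (rhi i))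
    (hle : ∀ i ∈ I1, ∀ y, rlo i y ≤ rhi i y)
    (Q1 Q2 Q3 Q : Set (Fin (n + 1) → ℝ))
    (hQ1 : Q1 = {x | ∀ i ∈ I1, rlo i (deleteCoord i x) ≤ x i ∧ x i ≤ rhi i (deleteCoord i x)})
    (hQ2 : Q2 = {x | ∀ i ∈ I2, rlo i (deleteCoord i x) ≤ x i})
    (hQ3 : Q3 = {x | ∀ i ∈ I3, x i ≤ rhi i (deleteCoord i x)})
    (hQ : Q = Q1 ∩ Q2 ∩ Q3) (hne : Q.Nonempty) :
    IsInjectiveSubset Q := by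
  have hQfix : Q = fixedPoints (sandwichClamp I1 I2 I3 rlo rhi) := by
    rw [hQ, hQ1, hQ2, hQ3, fixedPoints_sandwichClamp h12 h13 h23 hle]
  subst hQfix
  exact ((IsHyperconvex.pi fun _ => isHyperconvex_real).fixedPoints
    (lipschitzWith_sandwichClamp hlo1 hhi1 hlo2 hhi3) hne).isInjectiveMetricSpace
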